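/- arXiv:0804.2362 — 3 statements merged into one kernel-verified Lean document; each statement's English description precedes it below -/
import Mathlib

section
/- Fix a k × n matrix M_k with ±1 entries, let A ⊂ [n] with |A| = k and i ∉ A. Let the row (a_{k+1,1}, ..., a_{k+1,n}) consist of independent uniform ±1 signs. Let M_A be the k × k minor of M_k on columns A, and M_{A∪{i}} the (k+1) × (k+1) minor on columns A ∪ {i} of the extended matrix. Then P(|Per(M_{A∪{i}})| ≥ |Per(M_A)|) ≥ 1/2, and this holds even after conditioning on all entries of row k+1 other than a_{k+1,i}. -/
/-!
Expanding the permanent of the child minor along the new entry `a_{k+1,i}` shows that it is an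
affine function of that entry with slope `Per(M_A)`. The two values of the sign therefore give
children whose permanents differ by `2 Per(M_A)`, and by the triangle inequality at least one of
them is at least `|Per(M_A)|` in absolute value. So the set of good rows meets every pair
`{b, b with its i-th sign flipped}`; as flipping a sign preserves the uniform measure, the good
set has probability at least `1/2`, both for a fully random row and for a single random sign.
-/

open MeasureTheory

/-- The uniform probability measure on `{-1,+1}^n` sign patterns: this models a random row of
`n` iid uniform `±1` signs. -/
noncomputable def rowMeasure (n : ℕ) : Measure (Fin n → Bool) :=
  (PMF.uniformOfFintype (Fin n → Bool)).toMeasure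

/-- The `±1` sign associated to a boolean. -/
def sgn (b : Bool) : ℝ := if b then 1 else -1

/-- `permOn M A` is the permanent of the square minor of the `m × n` matrix `M` on the columns
in `A` (and all `m` rows), when `A` has exactly `m` elements (and `0` otherwise). -/
noncomputable def permOn {m n : ℕ} (M : Matrix (Fin m) (Fin n) ℝ) (A : Finset (Fin n)) : ℝ :=
  if h : A.card = m then (Matrix.of fun r c => M r ((A.orderIsoOfFin h c : Fin n))).permanent
  else 0

/-- `extendRow M r` appends the row `r` at the bottom of the `k × n` matrix `M`. -/
def extendRow {k n : ℕ} (M : Matrix (Fin k) (Fin n) ℝ) (r : Fin n → ℝ) :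
    Matrix (Fin (k + 1)) (Fin n) ℝ :=
  Matrix.of fun p c => if h : (p : ℕ) < k then M ⟨p, h⟩ c else r c

theorem PMF.map_equiv_uniformOfFintype {α : Type*} [Fintype α] [Nonempty α] (e : α ≃ α) :
    (PMF.uniformOfFintype α).map e = PMF.uniformOfFintype α := by
  ext a
  rw [PMF.map_apply, tsum_eq_single (e.symm a)]
  · simp
  · intro b hb
    rw [if_neg (fun h => hb (e.eq_symm_apply.mpr h.symm))]

theorem PMF.measurePreserving_uniformOfFintype {α : Type*} [Fintype α] [Nonempty α]
    [MeasurableSpace α] [MeasurableSingletonClass α] (e : α ≃ α) :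
    MeasurePreserving e (uniformOfFintype α).toMeasure (uniformOfFintype α).toMeasure := by
  have he : Measurable e := measurable_of_finite e
  exact ⟨he, by rw [PMF.toMeasure_map _ _ he, PMF.map_equiv_uniformOfFintype]⟩

theorem half_le_measure_of_forall_mem_or_apply_mem {α : Type*} [MeasurableSpace α]
    {μ : Measure α} [IsProbabilityMeasure μ] {f : α → α} (hf : MeasurePreserving f μ μ)
    {S : Set α} (hS : MeasurableSet S) (h : ∀ a, a ∈ S ∨ f a ∈ S) : 1 / 2 ≤ μ S := by
  have hcompl : μ Sᶜ ≤ μ S := calc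
    μ Sᶜ ≤ μ (f ⁻¹' S) := measure_mono fun a ha => (h a).resolve_left ha
    _ = μ S := hf.measure_preimage hS.nullMeasurableSet
  refine ENNReal.div_le_of_le_mul ?_
  calc (1 : ENNReal) = μ S + μ Sᶜ := (prob_add_prob_compl hS).symm
    _ ≤ μ S * 2 := by rw [mul_two]; gcongr

theorem PMF.half_le_toMeasure_uniformOfFintype {α : Type*} [Fintype α] [Nonempty α]
    [MeasurableSpace α] [MeasurableSingletonClass α] (e : α ≃ α) {S : Set α}
    (h : ∀ a, a ∈ S ∨ e a ∈ S) : 1 / 2 ≤ (PMF.uniformOfFintype α).toMeasure S :=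
  half_le_measure_of_forall_mem_or_apply_mem (PMF.measurePreserving_uniformOfFintype e)
    S.toFinite.measurableSet h

theorem Equiv.optionCongr_removeNone_of_apply_none {α : Type*} {F : Equiv.Perm (Option α)}
    (hF : F none = none) : Equiv.optionCongr (Equiv.removeNone F) = F := by
  ext1 x
  cases x with
  | none => simp [hF]
  | some x =>
    have hne : F (some x) ≠ none := fun h => Option.some_ne_none x (F.injective (h.trans hF.symm))
    exact Equiv.removeNone_some F (Option.ne_none_iff_exists'.mp hne)

namespace Matrix

open Finset

def permSuccAbove {m : ℕ} (p c : Fin (m + 1)) (τ : Equiv.Perm (Fin m)) :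
    Equiv.Perm (Fin (m + 1)) :=
  ((finSuccEquiv' c).trans (Equiv.optionCongr τ)).trans (finSuccEquiv' p).symm

@[simp]
lemma permSuccAbove_apply_self {m : ℕ} (p c : Fin (m + 1)) (τ : Equiv.Perm (Fin m)) :
    permSuccAbove p c τ c = p := by
  simp [permSuccAbove]

@[simp]
lemma permSuccAbove_apply_succAbove {m : ℕ} (p c : Fin (m + 1)) (τ : Equiv.Perm (Fin m))
    (j : Fin m) : permSuccAbove p c τ (c.succAbove j) = p.succAbove (τ j) := by
  simp [permSuccAbove]

lemma permSuccAbove_injective {m : ℕ} (p c : Fin (m + 1)) :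
    Function.Injective (permSuccAbove p c) := fun _ _ h => Equiv.ext fun j => by
  simpa using congr($h (c.succAbove j))

lemma exists_permSuccAbove_eq {m : ℕ} {p c : Fin (m + 1)} {σ : Equiv.Perm (Fin (m + 1))}
    (hσ : σ c = p) : ∃ τ, permSuccAbove p c τ = σ := by
  let F : Equiv.Perm (Option (Fin m)) :=
    ((finSuccEquiv' c).symm.trans σ).trans (finSuccEquiv' p)
  refine ⟨Equiv.removeNone F, ?_⟩
  rw [permSuccAbove, Equiv.optionCongr_removeNone_of_apply_none (by simp [F, hσ])]
  ext1 j
  simp [F]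

lemma sum_prod_perm_of_apply_eq {m : ℕ} {R : Type*} [CommSemiring R]
    (X : Matrix (Fin (m + 1)) (Fin (m + 1)) R) (p c : Fin (m + 1)) :
    ∑ σ : Equiv.Perm (Fin (m + 1)) with σ c = p, ∏ j, X (σ j) j
      = X p c * (X.submatrix p.succAbove c.succAbove).permanent := by
  rw [permanent, mul_sum]
  refine (sum_nbij (permSuccAbove p c) (fun _ _ => by simp)
    (fun _ _ _ _ h => permSuccAbove_injective p c h) ?_ ?_).symm
  · intro σ hσ
    simpa using exists_permSuccAbove_eq (mem_filter.mp hσ).2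
  · intro τ _
    rw [Fin.prod_univ_succAbove _ c]
    simp

lemma permanent_eq_add_of_eq_of_ne {m : ℕ} {R : Type*} [CommRing R]
    {X Y : Matrix (Fin (m + 1)) (Fin (m + 1)) R} (p c : Fin (m + 1))
    (h : ∀ q j, (q, j) ≠ (p, c) → X q j = Y q j) :
    X.permanent =
      Y.permanent + (X p c - Y p c) * (X.submatrix p.succAbove c.succAbove).permanent := by
  have hsplit (Z : Matrix (Fin (m + 1)) (Fin (m + 1)) R) : Z.permanent =
      ∑ σ : Equiv.Perm (Fin (m + 1)) with σ c = p, ∏ j, Z (σ j) j +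
      ∑ σ : Equiv.Perm (Fin (m + 1)) with ¬σ c = p, ∏ j, Z (σ j) j :=
    (sum_filter_add_sum_filter_not _ _ _).symm
  have hrest : ∑ σ : Equiv.Perm (Fin (m + 1)) with ¬σ c = p, ∏ j, X (σ j) j
      = ∑ σ : Equiv.Perm (Fin (m + 1)) with ¬σ c = p, ∏ j, Y (σ j) j := by
    refine sum_congr rfl fun σ hσ => prod_congr rfl fun j _ => h _ _ ?_
    intro hjc
    obtain ⟨hp, rfl⟩ := Prod.ext_iff.mp hjc
    exact (mem_filter.mp hσ).2 hp
  have hminor : X.submatrix p.succAbove c.succAbove = Y.submatrix p.succAbove c.succAbove :=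
    ext fun q j => h _ _ fun hqj => Fin.succAbove_ne p q (Prod.ext_iff.mp hqj).1
  rw [hsplit X, hsplit Y, sum_prod_perm_of_apply_eq, sum_prod_perm_of_apply_eq, hrest, hminor]
  ring

end Matrix

lemma Finset.orderEmbOfFin_insert_succAbove {α : Type*} [LinearOrder α] {s : Finset α} {a : α}
    {k : ℕ} (hs : s.card = k) (hins : (insert a s).card = k + 1) (c : Fin k) :
    (insert a s).orderEmbOfFin hins
        ((((insert a s).orderIsoOfFin hins).symm ⟨a, mem_insert_self a s⟩).succAbove c) =
      s.orderEmbOfFin hs c := by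
  set e := (insert a s).orderIsoOfFin hins
  set c₀ := e.symm ⟨a, mem_insert_self a s⟩
  have hmem (c : Fin k) : (e (c₀.succAbove c) : α) ∈ s := by
    refine mem_of_mem_insert_of_ne (e _).2 fun h => Fin.succAbove_ne c₀ c ?_
    rw [← e.symm_apply_apply (c₀.succAbove c)]
    exact congrArg e.symm (Subtype.ext h)
  have hmono : StrictMono fun c => (e (c₀.succAbove c) : α) :=
    fun _ _ h => e.strictMono (Fin.strictMono_succAbove c₀ h)
  simpa [← coe_orderIsoOfFin_apply] using congrFun (orderEmbOfFin_unique hs hmem hmono) c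

section extendRow

variable {k n : ℕ} (M : Matrix (Fin k) (Fin n) ℝ) (r : Fin n → ℝ)

@[simp]
lemma extendRow_last (c : Fin n) : extendRow M r (Fin.last k) c = r c := by
  simp [extendRow]

@[simp]
lemma extendRow_castSucc (p : Fin k) (c : Fin n) : extendRow M r p.castSucc c = M p c := by
  simp [extendRow]

end extendRow

lemma permOn_extendRow_update {k n : ℕ} (M : Matrix (Fin k) (Fin n) ℝ) {A : Finset (Fin n)}
    (hA : A.card = k) {i : Fin n} (hi : i ∉ A) (r : Fin n → ℝ) (x y : ℝ) :
    permOn (extendRow M (Function.update r i x)) (insert i A) =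
      permOn (extendRow M (Function.update r i y)) (insert i A) + (x - y) * permOn M A := by
  have hB : (insert i A).card = k + 1 := by rw [Finset.card_insert_of_notMem hi, hA]
  simp only [permOn, dif_pos hB, dif_pos hA, Finset.coe_orderIsoOfFin_apply]
  set c₀ := ((insert i A).orderIsoOfFin hB).symm ⟨i, Finset.mem_insert_self i A⟩
  set f := (insert i A).orderEmbOfFin hB
  have hfc₀ : f c₀ = i := by simp [f, c₀, ← Finset.coe_orderIsoOfFin_apply]
  have hf (c : Fin (k + 1)) (hc : c ≠ c₀) : f c ≠ i := by
    rw [← hfc₀]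
    exact f.injective.ne hc
  rw [Matrix.permanent_eq_add_of_eq_of_ne
    (Y := Matrix.of fun q c => extendRow M (Function.update r i y) q (f c)) (Fin.last k) c₀]
  · congr 2
    · simp [hfc₀]
    · congr 1
      ext p c
      simp [f, c₀, Finset.orderEmbOfFin_insert_succAbove hA hB]
  · intro q c hqc
    induction q using Fin.lastCases with
    | last =>
      have hc : c ≠ c₀ := fun h => hqc (by rw [h])
      simp [Function.update_of_ne (hf c hc)]
    | cast p => simp

lemma abs_permOn_le_extendRow_sgn_or_sgn_not {k n : ℕ} (M : Matrix (Fin k) (Fin n) ℝ)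
    {A : Finset (Fin n)} (hA : A.card = k) {i : Fin n} (hi : i ∉ A) (r : Fin n → ℝ)
    (s : Bool) :
    |permOn M A| ≤ |permOn (extendRow M (Function.update r i (sgn s))) (insert i A)| ∨
      |permOn M A| ≤ |permOn (extendRow M (Function.update r i (sgn !s))) (insert i A)| := by
  have hsplit := permOn_extendRow_update M hA hi r (sgn s) (sgn !s)
  have hsgn : |sgn s - sgn !s| = 2 := by cases s <;> norm_num [sgn]
  set X := permOn (extendRow M (Function.update r i (sgn s))) (insert i A)
  set Y := permOn (extendRow M (Function.update r i (sgn !s))) (insert i A)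
  have : 2 * |permOn M A| ≤ |X| + |Y| := calc
    2 * |permOn M A| = |X - Y| := by rw [hsplit, add_sub_cancel_left, abs_mul, hsgn]
    _ ≤ |X| + |Y| := abs_sub _ _
  by_contra! hlt
  linarith [hlt.1, hlt.2]

def flipAt {n : ℕ} (i : Fin n) : Equiv.Perm (Fin n → Bool) :=
  Function.Involutive.toPerm (fun b => Function.update b i !(b i)) fun b => by simp

theorem large_parent_large_child_general
    (k n : ℕ) (M : Matrix (Fin k) (Fin n) ℝ)
    (A : Finset (Fin n)) (hA : A.card = k) (i : Fin n) (hi : i ∉ A) :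
    (1 / 2 : ENNReal) ≤
      rowMeasure n
        {b | |permOn M A| ≤ |permOn (extendRow M fun j => sgn (b j)) (insert i A)|} ∧
    ∀ r : Fin n → ℝ, (∀ j, r j = 1 ∨ r j = -1) →
      (1 / 2 : ENNReal) ≤
        (PMF.uniformOfFintype Bool).toMeasure
          {s | |permOn M A| ≤
            |permOn (extendRow M (Function.update r i (sgn s))) (insert i A)|} := by
  refine ⟨PMF.half_le_toMeasure_uniformOfFintype (flipAt i) fun b => ?_,
    fun r _ => PMF.half_le_toMeasure_uniformOfFintype Equiv.boolNot
      (abs_permOn_le_extendRow_sgn_or_sgn_not M hA hi r)⟩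
  have h := abs_permOn_le_extendRow_sgn_or_sgn_not M hA hi (sgn ∘ b) (b i)
  rwa [← Function.comp_update, ← Function.comp_update, Function.update_eq_self] at h

/-- Large parent often has a large child: fixing the first `k` rows `M` and exposing a random
`(k+1)`-th row of iid uniform signs, for `A` of size `k` and `i ∉ A` the minor on columns
`A ∪ {i}` has permanent at least as large (in absolute value) as that on `A` with probability
at least `1/2`; moreover this still holds conditioned on all entries of the new row other than
the `i`-th one, i.e. when the new row is `r` updated at `i` by a single random sign. -/
theorem large_parent_large_child
    (k n : ℕ) (M : Matrix (Fin k) (Fin n) ℝ) (hM : ∀ p c, M p c = 1 ∨ M p c = -1)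
    (A : Finset (Fin n)) (hA : A.card = k) (i : Fin n) (hi : i ∉ A) :
    (1 / 2 : ENNReal) ≤
      rowMeasure n
        {b | |permOn M A| ≤ |permOn (extendRow M fun j => sgn (b j)) (insert i A)|} ∧
    ∀ r : Fin n → ℝ, (∀ j, r j = 1 ∨ r j = -1) →
      (1 / 2 : ENNReal) ≤
        (PMF.uniformOfFintype Bool).toMeasure
          {s | |permOn M A| ≤
            |permOn (extendRow M (Function.update r i (sgn s))) (insert i A)|} :=
  large_parent_large_child_general k n M A hA i hi
end

section
/- Fix a k × n matrix M_k with ±1 entries, A ⊂ [n] with |A| = k, and I ⊂ [n] \ A. Expose a random (k+1)-th row with iid uniform ±1 entries. Then P(|Per(M_{A∪{i}})| ≥ |Per(M_A)| for some i ∈ I) ≥ 1 - 2^{-|I|}. -/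
open MeasureTheory

/-!
Expanding the permanent of `M_{A ∪ {i}}` along the new row shows that, once the signs in the
columns of `A` are fixed, it is an affine function of the sign `a_{k+1,i}` with slope
`Per(M_A)`. Flipping that sign changes it by `±2 Per(M_A)`, so at most one of the two values is
smaller than `|Per(M_A)|` in absolute value. A row in which every child `i ∈ I` is small is
therefore determined by its entries outside `I`, and there are at most `2^(n - |I|)` such rows.
-/

open Equiv Finset

/-- The permutation on the right sends `j` to `i` and `j.succAbove x` to `i.succAbove (τ x)`. -/
theorem Fin.sum_perm_filter_apply_eq {M : Type*} [AddCommMonoid M] {m : ℕ}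
    (i j : Fin (m + 1)) (f : Perm (Fin (m + 1)) → M) :
    ∑ σ with σ j = i, f σ =
      ∑ τ : Perm (Fin m),
        f ((finSuccEquiv' j).trans (τ.optionCongr.trans (finSuccEquiv' i).symm)) := by
  symm
  refine sum_nbij' (fun τ => (finSuccEquiv' j).trans (τ.optionCongr.trans (finSuccEquiv' i).symm))
    (fun σ => removeNone ((finSuccEquiv' j).symm.trans (σ.trans (finSuccEquiv' i)))) ?_ ?_ ?_ ?_ ?_
  · simp [finSuccEquiv'_at, finSuccEquiv'_symm_none]
  · simp
  · intro τ _
    convert removeNone_optionCongr τ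
    ext x
    simp
  · intro σ hσ
    rw [mem_filter] at hσ
    have h := map_equiv_removeNone ((finSuccEquiv' j).symm.trans (σ.trans (finSuccEquiv' i)))
    ext x
    simp [h, finSuccEquiv'_symm_none, hσ, finSuccEquiv'_at]
  · simp

namespace Matrix

variable {R : Type*} [CommSemiring R] {m : ℕ}

theorem permanent_succ_column (A : Matrix (Fin (m + 1)) (Fin (m + 1)) R) (j : Fin (m + 1)) :
    A.permanent = ∑ i, A i j * (A.submatrix i.succAbove j.succAbove).permanent := by
  rw [permanent, ← sum_fiberwise univ (fun σ : Perm (Fin (m + 1)) => σ j)]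
  refine sum_congr rfl fun i _ => ?_
  rw [Fin.sum_perm_filter_apply_eq, permanent, mul_sum]
  refine sum_congr rfl fun τ _ => ?_
  rw [Fin.prod_univ_succAbove _ j]
  simp [finSuccEquiv'_at, finSuccEquiv'_symm_none, finSuccEquiv'_succAbove,
    finSuccEquiv'_symm_some]

theorem permanent_succ_row (A : Matrix (Fin (m + 1)) (Fin (m + 1)) R) (i : Fin (m + 1)) :
    A.permanent = ∑ j, A i j * (A.submatrix i.succAbove j.succAbove).permanent := by
  rw [← permanent_transpose, permanent_succ_column _ i]
  simp [← transpose_submatrix]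

end Matrix

open Matrix

variable {k n : ℕ}

theorem permOn_eq_permanent_submatrix {m : ℕ} (M : Matrix (Fin m) (Fin n) ℝ) {A : Finset (Fin n)}
    (hA : A.card = m) : permOn M A = (M.submatrix id (A.orderEmbOfFin hA)).permanent := by
  simp only [permOn, dif_pos hA, coe_orderIsoOfFin_apply]
  rfl

theorem permanent_extendRow_submatrix (M : Matrix (Fin k) (Fin n) ℝ) (r : Fin n → ℝ)
    (e : Fin (k + 1) → Fin n) :
    ((extendRow M r).submatrix id e).permanent =
      ∑ c, r (e c) * (M.submatrix id (e ∘ c.succAbove)).permanent := by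
  rw [permanent_succ_row _ (Fin.last k)]
  simp [extendRow, submatrix]

theorem permOn_extendRow_insert_sub (M : Matrix (Fin k) (Fin n) ℝ) {A : Finset (Fin n)}
    (hA : A.card = k) {i : Fin n} (hi : i ∉ A) {r r' : Fin n → ℝ} (h : ∀ j ∈ A, r j = r' j) :
    permOn (extendRow M r) (insert i A) - permOn (extendRow M r') (insert i A) =
      (r i - r' i) * permOn M A := by
  have hT : (insert i A).card = k + 1 := by rw [card_insert_of_notMem hi, hA]
  set e := (insert i A).orderEmbOfFin hT
  obtain ⟨c₀, hc₀⟩ : ∃ c₀, e c₀ = i := by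
    rw [← Set.mem_range, range_orderEmbOfFin]
    exact mem_insert_self i A
  have he_mem : ∀ c ≠ c₀, e c ∈ A := fun c hc =>
    (mem_insert.1 (orderEmbOfFin_mem _ hT c)).resolve_left
      fun h => hc (e.injective (h.trans hc₀.symm))
  have he_succAbove : ⇑e ∘ c₀.succAbove = A.orderEmbOfFin hA :=
    orderEmbOfFin_unique hA (fun c => he_mem _ (Fin.succAbove_ne c₀ c))
      (e.strictMono.comp (Fin.strictMono_succAbove c₀))
  rw [permOn_eq_permanent_submatrix _ hT, permOn_eq_permanent_submatrix _ hT,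
    permOn_eq_permanent_submatrix _ hA, permanent_extendRow_submatrix,
    permanent_extendRow_submatrix, ← sum_sub_distrib, sum_eq_single c₀]
  · rw [hc₀, he_succAbove, sub_mul]
  · intro c _ hc
    rw [h _ (he_mem c hc), sub_self]
  · simp

open scoped ENNReal

theorem PMF.toMeasure_uniformOfFintype_le_of_injOn_restrict {ι β : Type*} [Fintype ι]
    [DecidableEq ι] [Fintype β] [Nonempty β] [MeasurableSpace (ι → β)]
    [MeasurableSingletonClass (ι → β)] (I : Finset ι) {S : Set (ι → β)}
    (hS : S.InjOn fun b (j : {j // j ∉ I}) => b j) :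
    (PMF.uniformOfFintype (ι → β)).toMeasure S ≤ (Fintype.card β : ℝ≥0∞)⁻¹ ^ I.card := by
  classical
  set c := Fintype.card β
  have hI : I.card ≤ Fintype.card ι := card_le_univ I
  have hS_card : Fintype.card S ≤ c ^ (Fintype.card ι - I.card) := by
    have := Fintype.card_le_of_injective _ hS.injective
    simpa [Fintype.card_fun, Fintype.card_subtype_compl] using this
  have hc0 : (c : ℝ≥0∞) ^ (Fintype.card ι - I.card) ≠ 0 := by simp [c]
  have hctop : (c : ℝ≥0∞) ^ (Fintype.card ι - I.card) ≠ ⊤ := by simp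
  calc (PMF.uniformOfFintype (ι → β)).toMeasure S
      = Fintype.card S / (c : ℝ≥0∞) ^ Fintype.card ι := by
        rw [PMF.toMeasure_uniformOfFintype_apply S S.toFinite.measurableSet, Fintype.card_fun,
          Nat.cast_pow]
    _ ≤ (c : ℝ≥0∞) ^ (Fintype.card ι - I.card) * 1 /
          ((c : ℝ≥0∞) ^ (Fintype.card ι - I.card) * (c : ℝ≥0∞) ^ I.card) := by
        rw [mul_one, ← pow_add, Nat.sub_add_cancel hI]
        gcongr
        exact_mod_cast hS_card
    _ = (c : ℝ≥0∞)⁻¹ ^ I.card := by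
        rw [ENNReal.mul_div_mul_left _ _ hc0 hctop, one_div, ENNReal.inv_pow]

theorem abs_sgn_sub_sgn_of_ne {b b' : Bool} (h : b ≠ b') : |sgn b - sgn b'| = 2 := by
  revert h
  cases b <;> cases b' <;> norm_num [sgn]

theorem injOn_restrict_of_abs_permOn_insert_lt (M : Matrix (Fin k) (Fin n) ℝ)
    {A : Finset (Fin n)} (hA : A.card = k) {I : Finset (Fin n)} (hI : ∀ i ∈ I, i ∉ A) :
    Set.InjOn (fun b (j : {j // j ∉ I}) => b j)
      {b : Fin n → Bool | ∀ i ∈ I,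
        |permOn (extendRow M fun j => sgn (b j)) (insert i A)| < |permOn M A|} := by
  intro b hb b' hb' hbb'
  funext j
  by_cases hj : j ∈ I
  · by_contra hne
    have h_agree : ∀ a ∈ A, sgn (b a) = sgn (b' a) := fun a ha =>
      congrArg sgn (congrFun hbb' ⟨a, fun h => hI a h ha⟩)
    have h_diff := permOn_extendRow_insert_sub M hA (hI j hj) h_agree
    have h_triangle := abs_sub (permOn (extendRow M fun j => sgn (b j)) (insert j A))
      (permOn (extendRow M fun j => sgn (b' j)) (insert j A))
    rw [h_diff, abs_mul, abs_sgn_sub_sgn_of_ne hne] at h_triangle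
    linarith [hb j hj, hb' j hj]
  · exact congrFun hbb' ⟨j, hj⟩

theorem large_parent_some_large_child_general
    (k n : ℕ) (M : Matrix (Fin k) (Fin n) ℝ)
    (A : Finset (Fin n)) (hA : A.card = k) (I : Finset (Fin n)) (hI : ∀ i ∈ I, i ∉ A) :
    1 - (1 / 2 : ENNReal) ^ I.card ≤
      rowMeasure n
        {b | ∃ i ∈ I,
          |permOn M A| ≤ |permOn (extendRow M fun j => sgn (b j)) (insert i A)|} := by
  have : IsProbabilityMeasure (rowMeasure n) := PMF.toMeasure.isProbabilityMeasure _
  set S := {b : Fin n → Bool | ∃ i ∈ I,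
    |permOn M A| ≤ |permOn (extendRow M fun j => sgn (b j)) (insert i A)|}
  have hS_compl : Sᶜ = {b : Fin n → Bool | ∀ i ∈ I,
      |permOn (extendRow M fun j => sgn (b j)) (insert i A)| < |permOn M A|} := by
    ext b
    simp [S]
  have h_bad : rowMeasure n Sᶜ ≤ (1 / 2) ^ I.card := by
    have := PMF.toMeasure_uniformOfFintype_le_of_injOn_restrict I
      (hS_compl ▸ injOn_restrict_of_abs_permOn_insert_lt M hA hI)
    simpa [rowMeasure] using this
  rw [prob_compl_eq_one_sub S.toFinite.measurableSet] at h_bad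
  exact tsub_le_iff_tsub_le.mp h_bad

/-- Large parent often has large children: fixing the first `k` rows `M` with `±1` entries and
exposing a random `(k+1)`-th row of iid uniform signs, for `A` of size `k` and `I ⊆ [n] \ A`,
with probability at least `1 - 2^{-|I|}` some `i ∈ I` gives
`|Per(M_{A ∪ {i}})| ≥ |Per(M_A)|`. -/
theorem large_parent_some_large_child
    (k n : ℕ) (M : Matrix (Fin k) (Fin n) ℝ) (hM : ∀ p c, M p c = 1 ∨ M p c = -1)
    (A : Finset (Fin n)) (hA : A.card = k) (I : Finset (Fin n)) (hI : ∀ i ∈ I, i ∉ A) :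
    1 - (1 / 2 : ENNReal) ^ I.card ≤
      rowMeasure n
        {b | ∃ i ∈ I,
          |permOn M A| ≤ |permOn (extendRow M fun j => sgn (b j)) (insert i A)|} :=
  large_parent_some_large_child_general k n M A hA I hI
end

section
/- Let 1 ≤ k < n and λ > 0. Condition on the first k rows of a random ±1 matrix and suppose there exists A ∈ binom([n], k) with |Per(M_A)| ≥ λ. Then after exposing a random (k+1)-th row of iid ±1 signs, with probability at least 1 - 2^{-(n-k)} there exists A' ∈ binom([n], k+1) with |Per(M_{A'})| ≥ λ. -/
/-!
Fix a `λ`-heavy `k`-set `A`. For `j ∉ A`, expanding the minor on `A ∪ {j}` along the new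
row `b` gives `b_j · Per(M_A) + F_j`, where `F_j` depends only on the signs of `b` on `A`.
As `|Per(M_A)| ≥ λ`, the two values `b_j = ±1` cannot both leave this minor below `λ`. Hence
a row with no heavy `(k+1)`-set is determined by its signs on `A`: there are at most `2^k`
such rows among the `2^n`.
-/

open MeasureTheory

open Equiv Matrix

namespace Matrix

variable {R : Type*} [CommSemiring R]

theorem permanent_updateCol_add {n : Type*} [DecidableEq n] [Fintype n]
    (M : Matrix n n R) (j : n) (u v : n → R) :
    permanent (M.updateCol j (u + v)) =
      permanent (M.updateCol j u) + permanent (M.updateCol j v) := by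
  simp only [permanent, ← Finset.mul_prod_erase _ _ (Finset.mem_univ j),
    updateCol_self, Pi.add_apply, add_mul, Finset.sum_add_distrib]
  congr 1 <;>
  · refine Finset.sum_congr rfl fun σ _ => congrArg _ (Finset.prod_congr rfl fun i hi => ?_)
    rw [updateCol_ne (Finset.ne_of_mem_erase hi), updateCol_ne (Finset.ne_of_mem_erase hi)]

theorem permanent_updateRow_add {n : Type*} [DecidableEq n] [Fintype n]
    (M : Matrix n n R) (j : n) (u v : n → R) :
    permanent (M.updateRow j (u + v)) =
      permanent (M.updateRow j u) + permanent (M.updateRow j v) := by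
  simp only [← permanent_transpose (updateRow _ _ _), ← updateCol_transpose,
    permanent_updateCol_add]

theorem permanent_eq_permanent_submatrix_succ_of_row_zero {m : ℕ}
    (Q : Matrix (Fin (m + 1)) (Fin (m + 1)) R) (h : Q 0 = Pi.single 0 1) :
    permanent Q = permanent (Q.submatrix Fin.succ Fin.succ) := by
  rw [← permanent_transpose, ← permanent_transpose (submatrix _ _ _), permanent, permanent,
    ← (Perm.decomposeFin (n := m)).symm.sum_comp, Fintype.sum_prod_type, Fin.sum_univ_succ]
  simp [Fin.prod_univ_succ, Perm.decomposeFin_symm_apply_zero, h, Fin.succ_ne_zero]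

theorem permanent_eq_mul_permanent_submatrix_succ_add {m : ℕ}
    (Q : Matrix (Fin (m + 1)) (Fin (m + 1)) R) :
    permanent Q = Q 0 0 * permanent (Q.submatrix Fin.succ Fin.succ) +
      permanent (Q.updateRow 0 (Function.update (Q 0) 0 0)) := by
  have hrow : Q 0 = Q 0 0 • Pi.single 0 1 + Function.update (Q 0) 0 0 := by
    ext c; rcases eq_or_ne c 0 with rfl | hc <;> simp [*]
  conv_lhs => rw [← updateRow_eq_self Q 0, hrow]
  rw [permanent_updateRow_add, permanent_updateRow_smul,
    permanent_eq_permanent_submatrix_succ_of_row_zero _ (updateRow_self ..)]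
  rfl

end Matrix

open Finset
open scoped ENNReal

theorem permOn_eq_permanent {m n : ℕ} (M : Matrix (Fin m) (Fin n) ℝ) (A : Finset (Fin n))
    (ρ : Perm (Fin m)) (e : Fin m ≃ A) :
    permOn M A = (of fun p c => M (ρ p) (e c)).permanent := by
  have hA : A.card = m := by simpa using (Fintype.card_congr e).symm
  let o := A.orderIsoOfFin hA
  have he : ∀ c, (e c : Fin n) = o (e.trans o.symm.toEquiv c) := fun c => by simp
  simp_rw [permOn, dif_pos hA, he]
  rw [← permanent_permute_rows (e.trans o.symm.toEquiv), ← permanent_permute_cols ρ]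
  rfl

theorem permOn_extendRow_congr {k n : ℕ} (M : Matrix (Fin k) (Fin n) ℝ) {u u' : Fin n → ℝ}
    {A : Finset (Fin n)} (h : ∀ i ∈ A, u i = u' i) :
    permOn (extendRow M u) A = permOn (extendRow M u') A := by
  unfold permOn
  split_ifs with hA
  · congr 1
    ext p c
    simp only [extendRow, of_apply]
    split_ifs
    · rfl
    · exact h _ (orderEmbOfFin_mem A hA c)
  · rfl

theorem permOn_extendRow_insert {k n : ℕ} (M : Matrix (Fin k) (Fin n) ℝ) {A : Finset (Fin n)}
    (hA : A.card = k) {j : Fin n} (hj : j ∉ A) (r : Fin n → ℝ) :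
    permOn (extendRow M r) (insert j A) =
      r j * permOn M A + permOn (extendRow M (Function.update r j 0)) (insert j A) := by
  -- `ρ` and `e` move the appended row and the column `j` to position `0`.
  let o := A.orderIsoOfFin hA
  let e : Fin (k + 1) ≃ (insert j A : Finset (Fin n)) := (finSuccEquiv k).trans
    ((Equiv.optionCongr o.toEquiv).trans (subtypeInsertEquivOption hj).symm)
  have he0 : (e 0 : Fin n) = j := rfl
  have he_succ : ∀ i, (e i.succ : Fin n) = o i := fun i => rfl
  let ρ : Perm (Fin (k + 1)) := (Fin.cycleRange (Fin.last k)).symm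
  have hρ0 : ρ 0 = Fin.last k := Fin.cycleRange_symm_zero _
  have hρ_succ : ∀ i : Fin k, ρ i.succ = i.castSucc := fun i => by
    rw [Fin.cycleRange_symm_succ, Fin.succAbove_last]
  let Q : (Fin n → ℝ) → Matrix (Fin (k + 1)) (Fin (k + 1)) ℝ :=
    fun u => of fun p c => extendRow M u (ρ p) (e c)
  have hQ : ∀ u, permOn (extendRow M u) (insert j A) = (Q u).permanent :=
    fun u => permOn_eq_permanent _ _ ρ e
  have hQ00 : Q r 0 0 = r j := by simp [Q, extendRow, hρ0, he0]
  have hminor : (Q r).submatrix Fin.succ Fin.succ = of fun p c => M p (o c) := by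
    ext p c
    simp [Q, extendRow, hρ_succ, he_succ]
  have hrest : (Q r).updateRow 0 (Function.update (Q r 0) 0 0) = Q (Function.update r j 0) := by
    ext p c
    rcases eq_or_ne p 0 with rfl | hp
    · rcases eq_or_ne c 0 with rfl | hc
      · simp [Q, extendRow, hρ0, he0]
      · have : (e c : Fin n) ≠ j := fun h => hc (e.injective (Subtype.ext (h.trans he0.symm)))
        simp [Q, extendRow, hρ0, hc, this]
    · obtain ⟨i, rfl⟩ := Fin.exists_succ_eq.mpr hp
      simp [Q, extendRow, hρ_succ]
  rw [hQ, hQ, permanent_eq_mul_permanent_submatrix_succ_add, hQ00, hminor, hrest,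
    permOn_eq_permanent M A 1 o.toEquiv]
  rfl

theorem eq_of_abs_sgn_mul_add_lt {P F lam : ℝ} (hP : lam ≤ |P|) {s t : Bool}
    (hs : |sgn s * P + F| < lam) (ht : |sgn t * P + F| < lam) : s = t := by
  by_contra hst
  have hdiff : |sgn s - sgn t| = 2 := by
    cases s <;> cases t <;> simp_all [sgn] <;> norm_num
  have : 2 * |P| < 2 * lam := calc
    2 * |P| = |(sgn s * P + F) - (sgn t * P + F)| := by rw [← hdiff, ← abs_mul]; ring_nf
    _ ≤ |sgn s * P + F| + |sgn t * P + F| := abs_sub _ _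
    _ < 2 * lam := by linarith
  linarith

instance (n : ℕ) : IsProbabilityMeasure (rowMeasure n) := PMF.toMeasure.isProbabilityMeasure _

theorem rowMeasure_le_of_injOn_restrict {n : ℕ} (A : Finset (Fin n)) {C : Set (Fin n → Bool)}
    (hC : C.InjOn fun b (i : A) => b i) : rowMeasure n C ≤ (1 / 2) ^ (n - A.card) := by
  classical
  have hcard : Fintype.card C ≤ 2 ^ A.card := by
    simpa using Fintype.card_le_of_injective _ hC.injective
  have hsplit : (2 : ℝ≥0∞) ^ n = 2 ^ (n - A.card) * 2 ^ A.card := by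
    rw [← pow_add, Nat.sub_add_cancel (A.card_le_univ.trans_eq (Fintype.card_fin n))]
  rw [rowMeasure, PMF.toMeasure_uniformOfFintype_apply _ .of_discrete]
  calc (Fintype.card C : ℝ≥0∞) / Fintype.card (Fin n → Bool) ≤ 2 ^ A.card / 2 ^ n := by
        gcongr
        · exact_mod_cast hcard
        · simp
    _ = (1 / 2) ^ (n - A.card) := by
        nth_rw 1 [hsplit, ← one_mul ((2 : ℝ≥0∞) ^ A.card)]
        rw [ENNReal.mul_div_mul_right _ _ (by simp) (by simp), one_div, one_div, ENNReal.inv_pow]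

def heavyExtensions {k n : ℕ} (M : Matrix (Fin k) (Fin n) ℝ) (lam : ℝ) :
    Set (Fin n → Bool) :=
  {b | ∃ A' : Finset (Fin n), A'.card = k + 1 ∧
    lam ≤ |permOn (extendRow M fun j => sgn (b j)) A'|}

theorem injOn_restrict_compl_heavyExtensions {k n : ℕ} (M : Matrix (Fin k) (Fin n) ℝ)
    {A : Finset (Fin n)} (hA : A.card = k) {lam : ℝ} (hP : lam ≤ |permOn M A|) :
    (heavyExtensions M lam)ᶜ.InjOn fun b (i : A) => b i := by
  intro b hb b' hb' hbA
  funext j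
  by_cases hj : j ∈ A
  · exact congrFun hbA ⟨j, hj⟩
  let F (c : Fin n → Bool) : ℝ :=
    permOn (extendRow M (Function.update (fun i => sgn (c i)) j 0)) (insert j A)
  have hlight : ∀ c ∈ (heavyExtensions M lam)ᶜ, |sgn (c j) * permOn M A + F c| < lam :=
    fun c hc => not_le.mp fun h => hc ⟨insert j A, by rw [card_insert_of_notMem hj, hA],
      by rwa [permOn_extendRow_insert M hA hj]⟩
  have hF : F b = F b' := permOn_extendRow_congr M fun i hi => by
    rcases eq_or_ne i j with rfl | hij
    · simp
    · simp [Function.update_of_ne hij, congrFun hbA ⟨i, (mem_insert.mp hi).resolve_left hij⟩]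
  exact eq_of_abs_sgn_mul_add_lt hP (hlight b hb) (hF ▸ hlight b' hb')

theorem maintain_single_large_minor_general
    (k n : ℕ)
    (M : Matrix (Fin k) (Fin n) ℝ)
    (lam : ℝ)
    (hheavy : ∃ A : Finset (Fin n), A.card = k ∧ lam ≤ |permOn M A|) :
    1 - (1 / 2 : ENNReal) ^ (n - k) ≤
      rowMeasure n
        {b | ∃ A' : Finset (Fin n), A'.card = k + 1 ∧
          lam ≤ |permOn (extendRow M fun j => sgn (b j)) A'|} := by
  obtain ⟨A, hA, hP⟩ := hheavy
  have hlight := rowMeasure_le_of_injOn_restrict A (injOn_restrict_compl_heavyExtensions M hA hP)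
  rw [hA] at hlight
  calc 1 - (1 / 2 : ℝ≥0∞) ^ (n - k) ≤ 1 - rowMeasure n (heavyExtensions M lam)ᶜ :=
        tsub_le_tsub_left hlight 1
    _ = rowMeasure n (heavyExtensions M lam) := by
        rw [← prob_compl_eq_one_sub .of_discrete, compl_compl]

/-- Maintaining a single large minor: if among the first `k` rows `M` (with `±1` entries,
`1 ≤ k < n`) some `k`-column minor is `λ`-heavy, then after exposing a random `(k+1)`-th row
of iid uniform signs, with probability at least `1 - 2^{-(n-k)}` some `(k+1)`-column minor is
`λ`-heavy. -/
theorem maintain_single_large_minor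
    (k n : ℕ) (hk : 1 ≤ k) (hkn : k < n)
    (M : Matrix (Fin k) (Fin n) ℝ) (hM : ∀ p c, M p c = 1 ∨ M p c = -1)
    (lam : ℝ) (hlam : 0 < lam)
    (hheavy : ∃ A : Finset (Fin n), A.card = k ∧ lam ≤ |permOn M A|) :
    1 - (1 / 2 : ENNReal) ^ (n - k) ≤
      rowMeasure n
        {b | ∃ A' : Finset (Fin n), A'.card = k + 1 ∧
          lam ≤ |permOn (extendRow M fun j => sgn (b j)) A'|} :=
  maintain_single_large_minor_general k n M lam hheavy
end
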